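/- Let V ⊆ ℝ^{d−1} be open, let ψ : V → ℝ be twice continuously differentiable, and let v : ℝ^d → ℝ be twice continuously differentiable on an open set containing the graph {(ξ', ψ(ξ')) : ξ' ∈ V}, with v(ξ', ψ(ξ')) = 0 for every ξ' ∈ V. Let ξ̄' ∈ V satisfy ∇ψ(ξ̄') = 0, set ξ̄ = (ξ̄', ψ(ξ̄')), and assume L̄v(ξ̄) = 0. Then for every ε > 0, the function φ̃_ε(ξ) = √(ε² + ‖∇v(ξ)‖²) satisfies ∂_d φ̃_ε(ξ̄) = φ̃_ε(ξ̄)^{-1} (∂_d v(ξ̄))² (Δ'ψ(ξ̄') + ξ̄_d), where Δ'ψ = Σ_{i=1}^{d−1} ∂²_{ii} ψ. -/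

import Mathlib

/-!
Differentiating `v (ξ', ψ ξ') = 0` along `eᵢ` (`i < d`) gives `∂ᵢv + ∂ᵢψ · ∂_d v = 0` on the graph,
so at the critical point `ξ̄` the gradient of `v` is `∂_d v(ξ̄) e_d`. Differentiating once more, the
cross terms vanish because `∇ψ(ξ̄') = 0`, leaving `∂ᵢᵢv(ξ̄) = -∂ᵢᵢψ(ξ̄') ∂_d v(ξ̄)`. Since
`⟨ξ̄, ∇v(ξ̄)⟩ = ψ(ξ̄') ∂_d v(ξ̄)`, the equation `L̄v(ξ̄) = 0` then yields
`∂_dd v(ξ̄) = ∂_d v(ξ̄) (Δ'ψ(ξ̄') + ξ̄_d)`. Finally `∂_d φ̃_ε = φ̃_ε⁻¹ Σⱼ ∂ⱼv ∂_d∂ⱼv`, which at `ξ̄`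
reduces to `φ̃_ε⁻¹ ∂_d v ∂_dd v`.
-/

open Real MeasureTheory
open scoped BigOperators RealInnerProductSpace

/-- Partial derivative in the `i`-th coordinate direction. -/
noncomputable def pd {d : ℕ} (i : Fin d) (f : EuclideanSpace ℝ (Fin d) → ℝ)
    (x : EuclideanSpace ℝ (Fin d)) : ℝ :=
  fderiv ℝ f x (EuclideanSpace.single i 1)

/-- The (Gaussian) Ornstein–Uhlenbeck operator `L̄f(x) = Δf(x) − ⟨x, ∇f(x)⟩`. -/
noncomputable def OU {d : ℕ} (f : EuclideanSpace ℝ (Fin d) → ℝ)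
    (x : EuclideanSpace ℝ (Fin d)) : ℝ :=
  (∑ i, pd i (pd i f) x) - ⟪x, gradient f x⟫

/-- The point `(ξ', t) ∈ ℝ^{d+1}` with first `d` coordinates `ξ'` and last coordinate `t`. -/
noncomputable def graphPt {d : ℕ} (ξ' : EuclideanSpace ℝ (Fin d)) (t : ℝ) :
    EuclideanSpace ℝ (Fin (d + 1)) :=
  WithLp.toLp 2 (Fin.snoc (α := fun _ => ℝ) (WithLp.ofLp ξ') t)

/-- `φ̃_ε(ξ) = √(ε² + ‖∇v(ξ)‖²)`. -/
noncomputable def phiEps {d : ℕ} (ε : ℝ) (v : EuclideanSpace ℝ (Fin d) → ℝ)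
    (x : EuclideanSpace ℝ (Fin d)) : ℝ :=
  Real.sqrt (ε ^ 2 + ‖gradient v x‖ ^ 2)

section PartialDerivatives

variable {d : ℕ} {f g : EuclideanSpace ℝ (Fin d) → ℝ} {x : EuclideanSpace ℝ (Fin d)}

lemma gradient_apply (f : EuclideanSpace ℝ (Fin d) → ℝ) (x : EuclideanSpace ℝ (Fin d))
    (i : Fin d) : gradient f x i = pd i f x := by
  have h := InnerProductSpace.toDual_symm_apply (𝕜 := ℝ) (x := EuclideanSpace.single i 1)
    (y := fderiv ℝ f x)
  rwa [real_inner_comm, EuclideanSpace.inner_single_left, map_one, one_mul] at h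

lemma pd_eq_zero_of_gradient_eq_zero (h : gradient f x = 0) (i : Fin d) : pd i f x = 0 := by
  rw [← gradient_apply, h, PiLp.zero_apply]

lemma pd_eq_zero_of_eventuallyEq_zero (h : f =ᶠ[nhds x] 0) (i : Fin d) : pd i f x = 0 := by
  simp [pd, h.fderiv_eq]

lemma pd_add (hf : DifferentiableAt ℝ f x) (hg : DifferentiableAt ℝ g x) (i : Fin d) :
    pd i (fun y => f y + g y) x = pd i f x + pd i g x := by
  simp [pd, fderiv_fun_add hf hg]

lemma pd_mul (hf : DifferentiableAt ℝ f x) (hg : DifferentiableAt ℝ g x) (i : Fin d) :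
    pd i (fun y => f y * g y) x = pd i f x * g x + f x * pd i g x := by
  simp only [pd, fderiv_fun_mul hf hg, add_apply, smul_apply, smul_eq_mul]
  ring

lemma DifferentiableAt.pd (hf : DifferentiableAt ℝ (fderiv ℝ f) x) (i : Fin d) :
    DifferentiableAt ℝ (pd i f) x :=
  hf.clm_apply (differentiableAt_const _)

lemma gradient_eq_pd_last_smul {f : EuclideanSpace ℝ (Fin (d + 1)) → ℝ}
    {x : EuclideanSpace ℝ (Fin (d + 1))} (h : ∀ i : Fin d, pd i.castSucc f x = 0) :
    gradient f x = pd (Fin.last d) f x • EuclideanSpace.single (Fin.last d) 1 := by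
  ext j
  induction j using Fin.lastCases with
  | last => simp [gradient_apply]
  | cast j => simp [gradient_apply, h, (Fin.castSucc_lt_last j).ne]

end PartialDerivatives

lemma ContDiffOn.differentiableAt_fderiv {E F : Type*} [NormedAddCommGroup E] [NormedSpace ℝ E]
    [NormedAddCommGroup F] [NormedSpace ℝ F] {f : E → F} {s : Set E} (hf : ContDiffOn ℝ 2 f s)
    (hs : IsOpen s) {x : E} (hx : x ∈ s) : DifferentiableAt ℝ (fderiv ℝ f) x :=
  ((hf.contDiffAt (hs.mem_nhds hx)).fderiv_right le_rfl).differentiableAt one_ne_zero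

section Graph

variable {d : ℕ}

@[simp] lemma graphPt_castSucc (x : EuclideanSpace ℝ (Fin d)) (t : ℝ) (i : Fin d) :
    graphPt x t i.castSucc = x i := by
  simp [graphPt]

@[simp] lemma graphPt_last (x : EuclideanSpace ℝ (Fin d)) (t : ℝ) :
    graphPt x t (Fin.last d) = t := by
  simp [graphPt]

noncomputable def snocZeroCLM (d : ℕ) :
    EuclideanSpace ℝ (Fin d) →L[ℝ] EuclideanSpace ℝ (Fin (d + 1)) :=
  LinearMap.toContinuousLinearMap
    { toFun := fun x => graphPt x 0
      map_add' := fun x y => by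
        ext i; induction i using Fin.lastCases <;> simp
      map_smul' := fun c x => by
        ext i; induction i using Fin.lastCases <;> simp }

lemma snocZeroCLM_single (i : Fin d) :
    snocZeroCLM d (EuclideanSpace.single i 1) = EuclideanSpace.single i.castSucc 1 := by
  ext j
  induction j using Fin.lastCases with
  | last => simp [snocZeroCLM, (Fin.castSucc_lt_last i).ne']
  | cast j => simp [snocZeroCLM]

lemma graphPt_eq_snocZeroCLM_add (x : EuclideanSpace ℝ (Fin d)) (t : ℝ) :
    graphPt x t = snocZeroCLM d x + t • EuclideanSpace.single (Fin.last d) 1 := by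
  ext i
  induction i using Fin.lastCases with
  | last => simp [snocZeroCLM]
  | cast i => simp [snocZeroCLM, (Fin.castSucc_lt_last i).ne]

lemma HasFDerivAt.graphPt {ψ : EuclideanSpace ℝ (Fin d) → ℝ}
    {ψ' : EuclideanSpace ℝ (Fin d) →L[ℝ] ℝ} {y : EuclideanSpace ℝ (Fin d)}
    (hψ : HasFDerivAt ψ ψ' y) :
    HasFDerivAt (fun y => graphPt y (ψ y))
      (snocZeroCLM d + ψ'.smulRight (EuclideanSpace.single (Fin.last d) 1)) y := by
  simp_rw [graphPt_eq_snocZeroCLM_add]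
  exact (snocZeroCLM d).hasFDerivAt.add (hψ.smul_const _)

lemma pd_comp_graphPt {ψ : EuclideanSpace ℝ (Fin d) → ℝ}
    {g : EuclideanSpace ℝ (Fin (d + 1)) → ℝ} {y : EuclideanSpace ℝ (Fin d)}
    (hψ : DifferentiableAt ℝ ψ y) (hg : DifferentiableAt ℝ g (graphPt y (ψ y))) (i : Fin d) :
    pd i (fun y => g (graphPt y (ψ y))) y =
      pd i.castSucc g (graphPt y (ψ y)) + pd i ψ y * pd (Fin.last d) g (graphPt y (ψ y)) := by
  have hcomp : HasFDerivAt (fun y => g (graphPt y (ψ y))) _ y :=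
    hg.hasFDerivAt.comp y hψ.hasFDerivAt.graphPt
  rw [pd, hcomp.fderiv]
  simp [pd, snocZeroCLM_single]

end Graph

lemma phiEps_eq_sqrt_sum {d : ℕ} (ε : ℝ) (v : EuclideanSpace ℝ (Fin d) → ℝ) :
    phiEps ε v = fun x => √(ε ^ 2 + ∑ j, pd j v x ^ 2) := by
  ext x
  simp [phiEps, EuclideanSpace.real_norm_sq_eq, gradient_apply]

lemma pd_phiEps {d : ℕ} {ε : ℝ} (hε : ε ≠ 0) {v : EuclideanSpace ℝ (Fin d) → ℝ}
    {x : EuclideanSpace ℝ (Fin d)} (hv : DifferentiableAt ℝ (fderiv ℝ v) x) (i : Fin d) :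
    pd i (phiEps ε v) x = (phiEps ε v x)⁻¹ * ∑ j, pd j v x * pd i (pd j v) x := by
  have hpos : 0 < ε ^ 2 + ∑ j, pd j v x ^ 2 := by positivity
  have hderiv := ((HasFDerivAt.fun_sum fun j _ => ((hv.pd j).hasFDerivAt.pow 2)).const_add
    (ε ^ 2)).sqrt hpos.ne'
  rw [pd, phiEps_eq_sqrt_sum, hderiv.fderiv]
  simp only [pd, one_div, mul_inv_rev, Nat.add_one_sub_one, pow_one, nsmul_eq_mul,
    Nat.cast_ofNat, smul_apply, sum_apply, smul_eq_mul, Finset.mul_sum]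
  refine Finset.sum_congr rfl fun j _ => ?_
  ring

section GraphIdentities

variable {d : ℕ} {ψ : EuclideanSpace ℝ (Fin d) → ℝ} {v : EuclideanSpace ℝ (Fin (d + 1)) → ℝ}

lemma pd_castSucc_add_mul_pd_last_eq_zero {y : EuclideanSpace ℝ (Fin d)}
    (hψ : DifferentiableAt ℝ ψ y) (hv : DifferentiableAt ℝ v (graphPt y (ψ y)))
    (hzero : ∀ᶠ y' in nhds y, v (graphPt y' (ψ y')) = 0) (i : Fin d) :
    pd i.castSucc v (graphPt y (ψ y)) + pd i ψ y * pd (Fin.last d) v (graphPt y (ψ y)) = 0 := by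
  rw [← pd_comp_graphPt hψ hv]
  exact pd_eq_zero_of_eventuallyEq_zero hzero i

lemma pd_castSucc_pd_castSucc_eq_neg_mul {ξ' : EuclideanSpace ℝ (Fin d)} {i : Fin d}
    (hψ : DifferentiableAt ℝ ψ ξ') (hψ2 : DifferentiableAt ℝ (fderiv ℝ ψ) ξ')
    (hv2 : DifferentiableAt ℝ (fderiv ℝ v) (graphPt ξ' (ψ ξ'))) (hcrit : gradient ψ ξ' = 0)
    (hfirst : ∀ᶠ y in nhds ξ', pd i.castSucc v (graphPt y (ψ y)) +
      pd i ψ y * pd (Fin.last d) v (graphPt y (ψ y)) = 0) :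
    pd i.castSucc (pd i.castSucc v) (graphPt ξ' (ψ ξ')) =
      -(pd i (pd i ψ) ξ' * pd (Fin.last d) v (graphPt ξ' (ψ ξ'))) := by
  have hgraph := hψ.hasFDerivAt.graphPt.differentiableAt
  have hvi := (hv2.pd i.castSucc).fun_comp' ξ' hgraph
  have hvd := (hv2.pd (Fin.last d)).fun_comp' ξ' hgraph
  have h := pd_eq_zero_of_eventuallyEq_zero hfirst i
  rw [pd_add hvi ((hψ2.pd i).fun_mul hvd), pd_mul (hψ2.pd i) hvd, pd_comp_graphPt hψ (hv2.pd _),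
    pd_eq_zero_of_gradient_eq_zero hcrit] at h
  linear_combination h

end GraphIdentities

lemma pd_last_pd_last_of_OU_eq_zero {d : ℕ} {f : EuclideanSpace ℝ (Fin (d + 1)) → ℝ}
    {x : EuclideanSpace ℝ (Fin (d + 1))} {a : Fin d → ℝ} (hOU : OU f x = 0)
    (htan : ∀ i : Fin d, pd i.castSucc f x = 0)
    (hsecond : ∀ i : Fin d, pd i.castSucc (pd i.castSucc f) x = -(a i * pd (Fin.last d) f x)) :
    pd (Fin.last d) (pd (Fin.last d) f) x = pd (Fin.last d) f x * (∑ i, a i + x (Fin.last d)) := by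
  rw [OU, gradient_eq_pd_last_smul htan, Fin.sum_univ_castSucc] at hOU
  simp only [hsecond, Finset.sum_neg_distrib, ← Finset.sum_mul, real_inner_smul_right,
    EuclideanSpace.inner_single_right, conj_trivial, one_mul] at hOU
  linear_combination hOU

theorem normal_derivative_of_phiEps_on_graph {d : ℕ}
    (V : Set (EuclideanSpace ℝ (Fin d))) (hV : IsOpen V)
    (ψ : EuclideanSpace ℝ (Fin d) → ℝ) (hψ : ContDiffOn ℝ 2 ψ V)
    (v : EuclideanSpace ℝ (Fin (d + 1)) → ℝ) (U : Set (EuclideanSpace ℝ (Fin (d + 1))))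
    (hU : IsOpen U) (hgraph : ∀ ξ' ∈ V, graphPt ξ' (ψ ξ') ∈ U)
    (hv : ContDiffOn ℝ 2 v U) (hzero : ∀ ξ' ∈ V, v (graphPt ξ' (ψ ξ')) = 0)
    (ξ' : EuclideanSpace ℝ (Fin d)) (hξ' : ξ' ∈ V) (hcrit : gradient ψ ξ' = 0)
    (hOU : OU v (graphPt ξ' (ψ ξ')) = 0) :
    ∀ ε : ℝ, 0 < ε →
      pd (Fin.last d) (phiEps ε v) (graphPt ξ' (ψ ξ')) =
        (phiEps ε v (graphPt ξ' (ψ ξ')))⁻¹ *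
          (pd (Fin.last d) v (graphPt ξ' (ψ ξ'))) ^ 2 *
            ((∑ i : Fin d, pd i (pd i ψ) ξ') + ψ ξ') := by
  intro ε hε
  have hψ1 : ∀ y ∈ V, DifferentiableAt ℝ ψ y := fun y hy =>
    (hψ.differentiableOn two_ne_zero).differentiableAt (hV.mem_nhds hy)
  have hv1 : ∀ y ∈ V, DifferentiableAt ℝ v (graphPt y (ψ y)) := fun y hy =>
    (hv.differentiableOn two_ne_zero).differentiableAt (hU.mem_nhds (hgraph y hy))
  have hv2 := hv.differentiableAt_fderiv hU (hgraph ξ' hξ')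
  have hfirst : ∀ y ∈ V, ∀ i : Fin d, pd i.castSucc v (graphPt y (ψ y)) +
      pd i ψ y * pd (Fin.last d) v (graphPt y (ψ y)) = 0 := fun y hy =>
    pd_castSucc_add_mul_pd_last_eq_zero (hψ1 y hy) (hv1 y hy)
      (Filter.eventually_of_mem (hV.mem_nhds hy) hzero)
  have htan : ∀ i : Fin d, pd i.castSucc v (graphPt ξ' (ψ ξ')) = 0 := fun i => by
    simpa [pd_eq_zero_of_gradient_eq_zero hcrit] using hfirst ξ' hξ' i
  have hsecond : ∀ i : Fin d, pd i.castSucc (pd i.castSucc v) (graphPt ξ' (ψ ξ')) =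
      -(pd i (pd i ψ) ξ' * pd (Fin.last d) v (graphPt ξ' (ψ ξ'))) := fun i =>
    pd_castSucc_pd_castSucc_eq_neg_mul (hψ1 ξ' hξ') (hψ.differentiableAt_fderiv hV hξ') hv2 hcrit
      (Filter.eventually_of_mem (hV.mem_nhds hξ') fun y hy => hfirst y hy i)
  rw [pd_phiEps hε.ne' hv2, Fin.sum_univ_castSucc,
    pd_last_pd_last_of_OU_eq_zero hOU htan hsecond, graphPt_last]
  simp only [htan, zero_mul, Finset.sum_const_zero, zero_add]
  ring
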